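/- Let x₂, x₃, x₄, y₁, y₂, y₃, y₄ be rational numbers with y₁ ≠ 0, and suppose each of x₂x₃ + y₁y₄, x₂x₄ + y₁y₃, x₃x₄ + y₁y₂ is the square of a nonzero rational number. Then there exists a rational number x₁ such that Q(x₁,x₂,x₃,x₄,y₁,y₂,y₃,y₄) = 0 and each of x₁x₂ + y₃y₄, x₁x₃ + y₂y₄, x₁x₄ + y₂y₃ is the square of a rational number (hypermatrix completion). -/
import Mathlib


/-- The homogenised regular quadruple polynomial. -/
def Q {R : Type*} [CommRing R] (x1 x2 x3 x4 y1 y2 y3 y4 : R) : R :=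
  x1^2*y1^2 + x2^2*y2^2 + x3^2*y3^2 + x4^2*y4^2
    - 4*x1*x2*x3*x4 - 4*y1*y2*y3*y4
    - 2*x1*y1*x2*y2 - 2*x1*y1*x3*y3 - 2*x1*y1*x4*y4
    - 2*x2*y2*x3*y3 - 2*x2*y2*x4*y4 - 2*x3*y3*x4*y4

/-- Hypermatrix completion. -/
theorem hypermatrix_completion (x2 x3 x4 y1 y2 y3 y4 : ℚ) (hy1 : y1 ≠ 0)
    (h23 : ∃ r : ℚ, r ≠ 0 ∧ x2*x3 + y1*y4 = r^2)
    (h24 : ∃ r : ℚ, r ≠ 0 ∧ x2*x4 + y1*y3 = r^2)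
    (h34 : ∃ r : ℚ, r ≠ 0 ∧ x3*x4 + y1*y2 = r^2) :
    ∃ x1 : ℚ, Q x1 x2 x3 x4 y1 y2 y3 y4 = 0 ∧
      (∃ r : ℚ, x1*x2 + y3*y4 = r^2) ∧
      (∃ r : ℚ, x1*x3 + y2*y4 = r^2) ∧
      (∃ r : ℚ, x1*x4 + y2*y3 = r^2) := by
  obtain ⟨a, _, ha⟩ := h23
  obtain ⟨b, _, hb⟩ := h24
  obtain ⟨c, _, hc⟩ := h34
  have hy4 : y4 = (a^2 - x2*x3)/y1 := by field_simp; linarith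
  have hy3 : y3 = (b^2 - x2*x4)/y1 := by field_simp; linarith
  have hy2 : y2 = (c^2 - x3*x4)/y1 := by field_simp; linarith
  subst hy4 hy3 hy2
  refine ⟨(-x2*x3*x4 + x2*c^2 + x3*b^2 + x4*a^2 + 2*a*b*c)/y1^2, ?_,
    ⟨(x2*c + a*b)/y1, ?_⟩, ⟨(x3*b + a*c)/y1, ?_⟩, ⟨(x4*a + b*c)/y1, ?_⟩⟩
  · simp only [Q]; field_simp; ring
  · field_simp; ring
  · field_simp; ring
  · field_simp; ring
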